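/- The n × n matrix M̄ := I_n + (q − q^{−1})AD over 𝒜, whose entries are μ̄(l^i_j) = δ^i_j + (q − q^{−1}) Σ_k a^i_k ∂^k_j, satisfies the relation M̄₂ R^{−1} M̄₁ R₂₁^{−1} = R^{−1} M̄₁ R₂₁^{−1} M̄₂, where R := R[n]. (This is the reflection-type equation satisfied by the quantum moment map μ̄^e_v at the tail vertex of a non-loop edge.) -/
import Mathlib


open Matrix Kronecker

noncomputable section

/-- Coefficient matrix of the R-matrix `R[N]` on `k^N ⊗ k^N`: the entry in
row `(i,j)`, column `(s,t)` is `q^{δ_{ij}} δ_{is} δ_{jt} + (q-q⁻¹) θ(i-j) δ_{it} δ_{js}`,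
where `θ(x) = 1` if `x > 0` and `0` otherwise. -/
def Rmat (k : Type) [Field k] (q : k) (N : ℕ) :
    Matrix (Fin N × Fin N) (Fin N × Fin N) k :=
  Matrix.of fun p r =>
    (if p.1 = p.2 then q else 1) * (if p = r then 1 else 0)
      + (q - q⁻¹) * ((if p.2 < p.1 then (1 : k) else 0) *
          (if p.1 = r.2 ∧ p.2 = r.1 then 1 else 0))

/-- The explicit inverse of `R[N]`:
`(R⁻¹)^{ij}_{st} = q^{-δ_{ij}} δ_{is} δ_{jt} - (q-q⁻¹) θ(i-j) δ_{it} δ_{js}`. -/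
def RmatInv (k : Type) [Field k] (q : k) (N : ℕ) :
    Matrix (Fin N × Fin N) (Fin N × Fin N) k :=
  Matrix.of fun p r =>
    (if p.1 = p.2 then q⁻¹ else 1) * (if p = r then 1 else 0)
      - (q - q⁻¹) * ((if p.2 < p.1 then (1 : k) else 0) *
          (if p.1 = r.2 ∧ p.2 = r.1 then 1 else 0))

variable (k : Type) [Field k] (𝒜 : Type) [Ring 𝒜] [Algebra k 𝒜]

/-- `R[N]` regarded as a matrix over the `k`-algebra `𝒜`. -/
def RA (q : k) (N : ℕ) : Matrix (Fin N × Fin N) (Fin N × Fin N) 𝒜 :=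
  (Rmat k q N).map (algebraMap k 𝒜)

/-- `R[N]₂₁ := τ ∘ R[N] ∘ τ` regarded as a matrix over `𝒜`. -/
def RA21 (q : k) (N : ℕ) : Matrix (Fin N × Fin N) (Fin N × Fin N) 𝒜 :=
  Matrix.of fun p r => RA k 𝒜 q N (p.2, p.1) (r.2, r.1)

/-- `(R[N])⁻¹` regarded as a matrix over `𝒜`. -/
def RAinv (q : k) (N : ℕ) : Matrix (Fin N × Fin N) (Fin N × Fin N) 𝒜 :=
  (RmatInv k q N).map (algebraMap k 𝒜)

/-- `(R[N]₂₁)⁻¹ = (R[N]⁻¹)₂₁` regarded as a matrix over `𝒜`. -/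
def RAinv21 (q : k) (N : ℕ) : Matrix (Fin N × Fin N) (Fin N × Fin N) 𝒜 :=
  Matrix.of fun p r => RAinv k 𝒜 q N (p.2, p.1) (r.2, r.1)

/-- The flip `τ : k^m ⊗ k^n → k^n ⊗ k^m` as a matrix over `𝒜`. -/
def flipA (m n : ℕ) : Matrix (Fin n × Fin m) (Fin m × Fin n) 𝒜 :=
  Matrix.of fun p r => if p.1 = r.2 ∧ p.2 = r.1 then 1 else 0

/-- The defining relations (M1), (M2), (M3) of the quantized edge algebra `𝒟_q(e)`
of the Kronecker quiver with tail dimension `n` and head dimension `m`, for an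
`n × m` matrix `A` and an `m × n` matrix `D` over `𝒜`:
(M1) `R[n] A₂ A₁ = A₁ A₂ R[m]₂₁`, (M2) `R[m] D₂ D₁ = D₁ D₂ R[n]₂₁`,
(M3) `D₂ (R[n])⁻¹ A₁ = A₁ R[m] D₂ + τ`. -/
def EdgeRel (q : k) {n m : ℕ}
    (A : Matrix (Fin n) (Fin m) 𝒜) (D : Matrix (Fin m) (Fin n) 𝒜) : Prop :=
  RA k 𝒜 q n * ((1 : Matrix (Fin n) (Fin n) 𝒜) ⊗ₖ A) * (A ⊗ₖ (1 : Matrix (Fin m) (Fin m) 𝒜))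
      = (A ⊗ₖ (1 : Matrix (Fin n) (Fin n) 𝒜)) * ((1 : Matrix (Fin m) (Fin m) 𝒜) ⊗ₖ A)
          * RA21 k 𝒜 q m
    ∧ RA k 𝒜 q m * ((1 : Matrix (Fin m) (Fin m) 𝒜) ⊗ₖ D) * (D ⊗ₖ (1 : Matrix (Fin n) (Fin n) 𝒜))
      = (D ⊗ₖ (1 : Matrix (Fin m) (Fin m) 𝒜)) * ((1 : Matrix (Fin n) (Fin n) 𝒜) ⊗ₖ D)
          * RA21 k 𝒜 q n
    ∧ ((1 : Matrix (Fin n) (Fin n) 𝒜) ⊗ₖ D) * RAinv k 𝒜 q n * (A ⊗ₖ (1 : Matrix (Fin n) (Fin n) 𝒜))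
      = (A ⊗ₖ (1 : Matrix (Fin m) (Fin m) 𝒜)) * RA k 𝒜 q m * ((1 : Matrix (Fin m) (Fin m) 𝒜) ⊗ₖ D)
          + flipA 𝒜 m n

/-- The defining relations (L1), (L2), (L3) of the quantized loop edge algebra `𝒟_q(e)`
at a vertex of dimension `N`, with `R := R[N]`:
(L1) `R₂₁ A₁ R A₂ = A₂ R₂₁ A₁ R`, (L2) `R₂₁ D₁ R D₂ = D₂ R₂₁ D₁ R`,
(L3) `R₂₁ D₁ R A₂ = A₂ R₂₁ D₁ R₂₁⁻¹`. -/
def LoopRel (q : k) {N : ℕ} (A D : Matrix (Fin N) (Fin N) 𝒜) : Prop :=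
  RA21 k 𝒜 q N * (A ⊗ₖ (1 : Matrix (Fin N) (Fin N) 𝒜)) * RA k 𝒜 q N
        * ((1 : Matrix (Fin N) (Fin N) 𝒜) ⊗ₖ A)
      = ((1 : Matrix (Fin N) (Fin N) 𝒜) ⊗ₖ A) * RA21 k 𝒜 q N
        * (A ⊗ₖ (1 : Matrix (Fin N) (Fin N) 𝒜)) * RA k 𝒜 q N
    ∧ RA21 k 𝒜 q N * (D ⊗ₖ (1 : Matrix (Fin N) (Fin N) 𝒜)) * RA k 𝒜 q N
        * ((1 : Matrix (Fin N) (Fin N) 𝒜) ⊗ₖ D)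
      = ((1 : Matrix (Fin N) (Fin N) 𝒜) ⊗ₖ D) * RA21 k 𝒜 q N
        * (D ⊗ₖ (1 : Matrix (Fin N) (Fin N) 𝒜)) * RA k 𝒜 q N
    ∧ RA21 k 𝒜 q N * (D ⊗ₖ (1 : Matrix (Fin N) (Fin N) 𝒜)) * RA k 𝒜 q N
        * ((1 : Matrix (Fin N) (Fin N) 𝒜) ⊗ₖ A)
      = ((1 : Matrix (Fin N) (Fin N) 𝒜) ⊗ₖ A) * RA21 k 𝒜 q N
        * (D ⊗ₖ (1 : Matrix (Fin N) (Fin N) 𝒜)) * RAinv21 k 𝒜 q N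

section Aux
set_option linter.unusedSectionVars false

variable {k : Type} [Field k] {𝒜 : Type} [Ring 𝒜] [Algebra k 𝒜]
variable {α β γ δ ε ζ : Type} [Fintype α] [Fintype β] [Fintype γ] [Fintype δ]
variable [DecidableEq α] [DecidableEq β]

/-- The "swap both legs" operation on a matrix indexed by pairs. -/
def Tsw (X : Matrix (α × β) (γ × δ) 𝒜) : Matrix (β × α) (δ × γ) 𝒜 :=
  X.submatrix Prod.swap Prod.swap

lemma Tsw_mul [Fintype ε] (X : Matrix (α × β) (γ × δ) 𝒜) (Y : Matrix (γ × δ) (ε × ζ) 𝒜) :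
    Tsw (X * Y) = Tsw X * Tsw Y := by
  have h := Matrix.submatrix_mul_equiv X Y (Prod.swap : β × α → α × β)
      (Equiv.prodComm δ γ) (Prod.swap : ζ × ε → ε × ζ)
  simpa [Tsw, Equiv.coe_prodComm] using h.symm

lemma Tsw_one : Tsw (1 : Matrix (α × β) (α × β) 𝒜) = 1 := by
  ext p r
  simp only [Tsw, Matrix.submatrix_apply, Matrix.one_apply]
  aesop

lemma Tsw_add (X Y : Matrix (α × β) (γ × δ) 𝒜) : Tsw (X + Y) = Tsw X + Tsw Y := rfl

lemma Tsw_smul (c : k) (X : Matrix (α × β) (γ × δ) 𝒜) : Tsw (c • X) = c • Tsw X := rfl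

lemma Tsw_sub (X Y : Matrix (α × β) (γ × δ) 𝒜) : Tsw (X - Y) = Tsw X - Tsw Y := rfl

lemma Tsw_one_kron {a b c : ℕ} (X : Matrix (Fin a) (Fin b) 𝒜) :
    Tsw ((1 : Matrix (Fin c) (Fin c) 𝒜) ⊗ₖ X) = X ⊗ₖ (1 : Matrix (Fin c) (Fin c) 𝒜) := by
  ext p r
  simp only [Tsw, Matrix.submatrix_apply, Matrix.kroneckerMap_apply, Prod.fst_swap,
    Prod.snd_swap, Matrix.one_apply]
  split_ifs <;> simp

lemma Tsw_kron_one {a b c : ℕ} (X : Matrix (Fin a) (Fin b) 𝒜) :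
    Tsw (X ⊗ₖ (1 : Matrix (Fin c) (Fin c) 𝒜)) = (1 : Matrix (Fin c) (Fin c) 𝒜) ⊗ₖ X := by
  ext p r
  simp only [Tsw, Matrix.submatrix_apply, Matrix.kroneckerMap_apply, Prod.fst_swap,
    Prod.snd_swap, Matrix.one_apply]
  split_ifs <;> simp

lemma Tsw_flip {a b : ℕ} : Tsw (flipA 𝒜 a b) = flipA 𝒜 b a := by
  ext p r
  simp only [Tsw, Matrix.submatrix_apply, flipA, Matrix.of_apply, Prod.swap]
  aesop

lemma Tsw_RA (q : k) (N : ℕ) : Tsw (RA k 𝒜 q N) = RA21 k 𝒜 q N := rfl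

lemma Tsw_RAinv (q : k) (N : ℕ) : Tsw (RAinv k 𝒜 q N) = RAinv21 k 𝒜 q N := rfl

end Aux
section Aux2
set_option linter.unusedSectionVars false
set_option maxHeartbeats 1000000

variable {k : Type} [Field k] {𝒜 : Type} [Ring 𝒜] [Algebra k 𝒜]

lemma kron_one_mul {a b c d : ℕ} (X : Matrix (Fin a) (Fin b) 𝒜) (Y : Matrix (Fin b) (Fin c) 𝒜) :
    (X ⊗ₖ (1 : Matrix (Fin d) (Fin d) 𝒜)) * (Y ⊗ₖ (1 : Matrix (Fin d) (Fin d) 𝒜))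
      = (X * Y) ⊗ₖ (1 : Matrix (Fin d) (Fin d) 𝒜) := by
  ext p r
  simp only [Matrix.mul_apply, Matrix.kroneckerMap_apply, Fintype.sum_prod_type,
    Matrix.one_apply, mul_ite, ite_mul, mul_one, one_mul, mul_zero, zero_mul,
    Finset.sum_ite_eq, Finset.mem_univ, if_true]
  split_ifs <;> simp [Finset.sum_ite_eq, Matrix.mul_apply] <;> tauto

lemma one_kron_mul {a b c d : ℕ} (X : Matrix (Fin a) (Fin b) 𝒜) (Y : Matrix (Fin b) (Fin c) 𝒜) :
    ((1 : Matrix (Fin d) (Fin d) 𝒜) ⊗ₖ X) * ((1 : Matrix (Fin d) (Fin d) 𝒜) ⊗ₖ Y)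
      = (1 : Matrix (Fin d) (Fin d) 𝒜) ⊗ₖ (X * Y) := by
  ext p r
  simp only [Matrix.mul_apply, Matrix.kroneckerMap_apply, Fintype.sum_prod_type,
    Matrix.one_apply, mul_ite, ite_mul, mul_one, one_mul, mul_zero, zero_mul,
    Finset.sum_ite_eq, Finset.mem_univ, if_true]
  split_ifs <;> simp [Finset.sum_ite_eq, Matrix.mul_apply] <;> tauto

lemma flip_G1 {a b c : ℕ} (B : Matrix (Fin a) (Fin b) 𝒜) :
    ((1 : Matrix (Fin c) (Fin c) 𝒜) ⊗ₖ B) * flipA 𝒜 b c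
      = flipA 𝒜 a c * (B ⊗ₖ (1 : Matrix (Fin c) (Fin c) 𝒜)) := by
  ext p r
  simp only [Matrix.mul_apply, Matrix.kroneckerMap_apply, Fintype.sum_prod_type,
    Matrix.one_apply, flipA, Matrix.of_apply, mul_ite, ite_mul, mul_one, one_mul,
    mul_zero, zero_mul]
  rw [Finset.sum_comm]
  simp only [ite_and, Finset.sum_ite_eq, Finset.sum_ite_eq', Finset.mem_univ, if_true]
  split_ifs <;> simp_all

lemma flip_G2 {a b c : ℕ} (B : Matrix (Fin a) (Fin b) 𝒜) :
    flipA 𝒜 c a * ((1 : Matrix (Fin c) (Fin c) 𝒜) ⊗ₖ B)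
      = (B ⊗ₖ (1 : Matrix (Fin c) (Fin c) 𝒜)) * flipA 𝒜 c b := by
  ext p r
  simp only [Matrix.mul_apply, Matrix.kroneckerMap_apply, Fintype.sum_prod_type,
    Matrix.one_apply, flipA, Matrix.of_apply, mul_ite, ite_mul, mul_one, one_mul,
    mul_zero, zero_mul]
  rw [Finset.sum_comm]
  simp only [ite_and, Finset.sum_ite_eq, Finset.sum_ite_eq', Finset.mem_univ, if_true]
  split_ifs <;> simp_all

end Aux2
section Aux3
set_option linter.unusedSectionVars false
set_option linter.unusedVariables false
set_option maxHeartbeats 1000000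

variable {k : Type} [Field k] {𝒜 : Type} [Ring 𝒜] [Algebra k 𝒜]

/-- The strictly-triangular part of the R-matrix. -/
def TmatK (k : Type) [Field k] (N : ℕ) : Matrix (Fin N × Fin N) (Fin N × Fin N) k :=
  Matrix.of fun p r => if p.2 < p.1 ∧ p.1 = r.2 ∧ p.2 = r.1 then (1 : k) else 0

lemma Rmat_decomp (q : k) (N : ℕ) :
    Rmat k q N
      = Matrix.diagonal (fun p : Fin N × Fin N => if p.1 = p.2 then q else 1)
        + (q - q⁻¹) • TmatK k N := by
  ext p r
  simp only [Rmat, TmatK, Matrix.add_apply, Matrix.diagonal_apply, Matrix.smul_apply,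
    Matrix.of_apply, smul_eq_mul, ite_and, mul_ite, ite_mul, mul_one, one_mul,
    mul_zero, zero_mul]
  split_ifs <;> ring

lemma RmatInv_decomp (q : k) (N : ℕ) :
    RmatInv k q N
      = Matrix.diagonal (fun p : Fin N × Fin N => if p.1 = p.2 then q⁻¹ else 1)
        - (q - q⁻¹) • TmatK k N := by
  ext p r
  simp only [RmatInv, TmatK, Matrix.sub_apply, Matrix.diagonal_apply, Matrix.smul_apply,
    Matrix.of_apply, smul_eq_mul, ite_and, mul_ite, ite_mul, mul_one, one_mul,
    mul_zero, zero_mul]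
  split_ifs <;> ring

lemma diag_mul_TmatK (N : ℕ) (d : k) :
    Matrix.diagonal (fun p : Fin N × Fin N => if p.1 = p.2 then d else 1) * TmatK k N
      = TmatK k N := by
  ext p r
  rw [Matrix.diagonal_mul]
  by_cases h : p.1 = p.2
  · have : ¬ (p.2 < p.1 ∧ p.1 = r.2 ∧ p.2 = r.1) := by
      rintro ⟨hlt, -, -⟩
      rw [h] at hlt
      exact lt_irrefl _ hlt
    simp [TmatK, this]
  · simp [TmatK, h]

lemma TmatK_mul_diag (N : ℕ) (d : k) :
    TmatK k N * Matrix.diagonal (fun p : Fin N × Fin N => if p.1 = p.2 then d else 1)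
      = TmatK k N := by
  ext p r
  rw [Matrix.mul_diagonal]
  by_cases h : r.1 = r.2
  · have : ¬ (p.2 < p.1 ∧ p.1 = r.2 ∧ p.2 = r.1) := by
      rintro ⟨hlt, he1, he2⟩
      rw [he1, he2, ← h] at hlt
      exact lt_irrefl _ hlt
    simp [TmatK, this]
  · simp [TmatK, h]

lemma TmatK_mul_TmatK (N : ℕ) : TmatK k N * TmatK k N = 0 := by
  ext p r
  rw [Matrix.mul_apply]
  apply Finset.sum_eq_zero
  intro c _
  simp only [TmatK, Matrix.of_apply, Matrix.zero_apply]
  split_ifs with h1 h2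
  · exfalso
    obtain ⟨hlt1, he1, he2⟩ := h1
    obtain ⟨hlt2, -, -⟩ := h2
    rw [he1, he2] at hlt1
    exact lt_irrefl _ (lt_trans hlt1 hlt2)
  all_goals simp

lemma diag_mul_diag (N : ℕ) (d e : k) (h : d * e = 1) :
    Matrix.diagonal (fun p : Fin N × Fin N => if p.1 = p.2 then d else 1)
      * Matrix.diagonal (fun p : Fin N × Fin N => if p.1 = p.2 then e else 1) = 1 := by
  rw [Matrix.diagonal_mul_diagonal,
    show (fun i : Fin N × Fin N => (if i.1 = i.2 then d else 1) * (if i.1 = i.2 then e else 1))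
        = fun _ => (1 : k) from funext fun i => by split_ifs <;> simp [h],
    Matrix.diagonal_one]

lemma Rmat_mul_RmatInv (q : k) (hq : q ≠ 0) (N : ℕ) :
    Rmat k q N * RmatInv k q N = 1 := by
  rw [Rmat_decomp, RmatInv_decomp, add_mul, mul_sub, mul_sub,
    Matrix.smul_mul, Matrix.smul_mul, Matrix.mul_smul, Matrix.mul_smul,
    diag_mul_diag N q q⁻¹ (mul_inv_cancel₀ hq), diag_mul_TmatK N q,
    TmatK_mul_diag N q⁻¹, TmatK_mul_TmatK, smul_zero, smul_zero]
  abel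

lemma RmatInv_mul_Rmat (q : k) (hq : q ≠ 0) (N : ℕ) :
    RmatInv k q N * Rmat k q N = 1 := by
  rw [Rmat_decomp, RmatInv_decomp, sub_mul, mul_add, mul_add,
    Matrix.smul_mul, Matrix.smul_mul, Matrix.mul_smul, Matrix.mul_smul,
    diag_mul_diag N q⁻¹ q (inv_mul_cancel₀ hq), diag_mul_TmatK N q⁻¹,
    TmatK_mul_diag N q, TmatK_mul_TmatK, smul_zero, smul_zero]
  abel

end Aux3
section Aux4
set_option linter.unusedSectionVars false
set_option linter.unusedVariables false
set_option maxHeartbeats 1000000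

variable {k : Type} [Field k] {𝒜 : Type} [Ring 𝒜] [Algebra k 𝒜]

lemma RA_mul_RAinv (q : k) (hq : q ≠ 0) (N : ℕ) :
    RA k 𝒜 q N * RAinv k 𝒜 q N = 1 := by
  rw [RA, RAinv, ← Matrix.map_mul, Rmat_mul_RmatInv q hq,
    Matrix.map_one _ (map_zero _) (map_one _)]

lemma RAinv_mul_RA (q : k) (hq : q ≠ 0) (N : ℕ) :
    RAinv k 𝒜 q N * RA k 𝒜 q N = 1 := by
  rw [RA, RAinv, ← Matrix.map_mul, RmatInv_mul_Rmat q hq,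
    Matrix.map_one _ (map_zero _) (map_one _)]

lemma Tsw_Tsw {α β γ δ : Type} (X : Matrix (α × β) (γ × δ) 𝒜) : Tsw (Tsw X) = X := rfl

lemma RA21_mul_RAinv21 (q : k) (hq : q ≠ 0) (N : ℕ) :
    RA21 k 𝒜 q N * RAinv21 k 𝒜 q N = 1 := by
  rw [← Tsw_RA (k := k) (𝒜 := 𝒜) q N, ← Tsw_RAinv (k := k) (𝒜 := 𝒜) q N, ← Tsw_mul,
    RA_mul_RAinv q hq, Tsw_one]

lemma RAinv21_mul_RA21 (q : k) (hq : q ≠ 0) (N : ℕ) :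
    RAinv21 k 𝒜 q N * RA21 k 𝒜 q N = 1 := by
  rw [← Tsw_RA (k := k) (𝒜 := 𝒜) q N, ← Tsw_RAinv (k := k) (𝒜 := 𝒜) q N, ← Tsw_mul,
    RAinv_mul_RA q hq, Tsw_one]

lemma Tsw_map {α β γ δ : Type} (f : k → 𝒜) (X : Matrix (α × β) (γ × δ) k) :
    Tsw (X.map f) = (Tsw X).map f := rfl

/-- diagonal over 𝒜 built from `d` on the diagonal-pairs. -/
def DA (𝒜 : Type) [Ring 𝒜] (u v : 𝒜) (N : ℕ) : Matrix (Fin N × Fin N) (Fin N × Fin N) 𝒜 :=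
  Matrix.diagonal (fun p : Fin N × Fin N => if p.1 = p.2 then u else v)

lemma RA_decomp (q : k) (N : ℕ) :
    RA k 𝒜 q N = DA 𝒜 (algebraMap k 𝒜 q) 1 N + (q - q⁻¹) • (TmatK k N).map (algebraMap k 𝒜) := by
  ext p r
  rw [RA, Matrix.map_apply, Rmat_decomp q N, Matrix.add_apply, Matrix.smul_apply,
    smul_eq_mul, map_add, _root_.map_mul, Matrix.add_apply, Matrix.smul_apply,
    Algebra.smul_def, Matrix.map_apply]
  congr 1
  by_cases h : p = r
  · subst h
    by_cases h2 : p.1 = p.2 <;> simp [DA, Matrix.diagonal_apply, h2]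
  · simp [DA, Matrix.diagonal_apply, h]

lemma RAinv_decomp (q : k) (N : ℕ) :
    RAinv k 𝒜 q N
      = DA 𝒜 (algebraMap k 𝒜 q⁻¹) 1 N - (q - q⁻¹) • (TmatK k N).map (algebraMap k 𝒜) := by
  ext p r
  rw [RAinv, Matrix.map_apply, RmatInv_decomp q N, Matrix.sub_apply, Matrix.smul_apply,
    smul_eq_mul, map_sub, _root_.map_mul, Matrix.sub_apply, Matrix.smul_apply,
    Algebra.smul_def, Matrix.map_apply]
  congr 1
  by_cases h : p = r
  · subst h
    by_cases h2 : p.1 = p.2 <;> simp [DA, Matrix.diagonal_apply, h2]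
  · simp [DA, Matrix.diagonal_apply, h]

lemma Tsw_DA (u v : 𝒜) (N : ℕ) : Tsw (DA 𝒜 u v N) = DA 𝒜 u v N := by
  ext p r
  simp only [Tsw, Matrix.submatrix_apply, DA, Matrix.diagonal_apply, Prod.swap]
  by_cases h : p = r
  · subst h
    simp [eq_comm]
  · have h2 : (p.2, p.1) ≠ (r.2, r.1) := by
      simp only [ne_eq, Prod.mk.injEq, not_and]
      intro h1 h2
      exact h (Prod.ext h2 h1)
    simp [h, h2]

lemma flip_decomp (N : ℕ) :
    flipA 𝒜 N N
      = (TmatK k N).map (algebraMap k 𝒜) + Tsw ((TmatK k N).map (algebraMap k 𝒜))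
        + DA 𝒜 1 0 N := by
  ext ⟨i, j⟩ ⟨s, t⟩
  simp only [flipA, Matrix.of_apply, Matrix.add_apply, Tsw, Matrix.submatrix_apply,
    Matrix.map_apply, TmatK, DA, Matrix.diagonal_apply, Prod.swap, Prod.mk.injEq]
  by_cases hc : i = t ∧ j = s
  · obtain ⟨hit, hjs⟩ := hc
    subst hit
    subst hjs
    rcases lt_trichotomy i j with h | h | h
    · simp [h, lt_asymm h, h.ne, h.ne']
    · subst h
      simp [lt_irrefl]
    · simp [h, lt_asymm h, h.ne, h.ne']
  · have h1 : ¬ (j < i ∧ i = t ∧ j = s) := fun h => hc h.2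
    have h2 : ¬ (i < j ∧ j = s ∧ i = t) := fun h => hc ⟨h.2.2, h.2.1⟩
    rw [if_neg hc, if_neg h1, if_neg h2, map_zero, zero_add]
    by_cases hpr : i = s ∧ j = t
    · have hij : ¬ i = j := by
        rintro rfl
        exact hc ⟨hpr.2, hpr.1⟩
      rw [if_pos hpr, if_neg hij, add_zero]
    · rw [if_neg hpr, add_zero]

lemma DA_sub (q : k) (N : ℕ) :
    DA 𝒜 (algebraMap k 𝒜 q) 1 N - (q - q⁻¹) • DA 𝒜 1 0 N
      = DA 𝒜 (algebraMap k 𝒜 q⁻¹) 1 N := by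
  ext p r
  simp only [Matrix.sub_apply, Matrix.smul_apply, DA, Matrix.diagonal_apply]
  split_ifs with h1 h2
  · rw [Algebra.smul_def, mul_one, ← map_sub]
    congr 1
    ring
  · simp
  · simp

lemma heckeA (q : k) (n : ℕ) :
    RAinv k 𝒜 q n = RA21 k 𝒜 q n - (q - q⁻¹) • flipA 𝒜 n n := by
  rw [← Tsw_RA (k := k) (𝒜 := 𝒜) q n, RA_decomp, RAinv_decomp, Tsw_add, Tsw_smul, Tsw_DA,
    flip_decomp (k := k), ← DA_sub (𝒜 := 𝒜) q n, smul_add, smul_add]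
  abel

lemma heckeA21 (q : k) (n : ℕ) :
    RAinv21 k 𝒜 q n = RA k 𝒜 q n - (q - q⁻¹) • flipA 𝒜 n n := by
  rw [← Tsw_RAinv (k := k) (𝒜 := 𝒜) q n, RA_decomp, RAinv_decomp, Tsw_sub, Tsw_smul, Tsw_DA,
    flip_decomp (k := k), ← DA_sub (𝒜 := 𝒜) q n, smul_add, smul_add]
  abel

end Aux4
set_option maxHeartbeats 2000000 in
/-- Given matrices `A` (n × m) and `D` (m × n) over `𝒜` satisfying the
defining relations of the quantized edge algebra `𝒟_q(e)`, the matrix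
`M̄ := I_n + (q - q⁻¹) A D`, with entries `μ̄(l^i_j) = δ^i_j + (q - q⁻¹) Σ_k a^i_k ∂^k_j`,
satisfies `M̄₂ R⁻¹ M̄₁ R₂₁⁻¹ = R⁻¹ M̄₁ R₂₁⁻¹ M̄₂` with `R := R[n]`.  (This is the
reflection-type equation satisfied by the quantum moment map `μ̄^e_v` at the tail vertex
of a non-loop edge.) -/
theorem moment_map_tail_vertex (q : k) (hq : q ≠ 0) {n m : ℕ}
    (A : Matrix (Fin n) (Fin m) 𝒜) (D : Matrix (Fin m) (Fin n) 𝒜)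
    (hrel : EdgeRel k 𝒜 q A D) :
    ((1 : Matrix (Fin n) (Fin n) 𝒜) ⊗ₖ ((1 : Matrix (Fin n) (Fin n) 𝒜) + (q - q⁻¹) • (A * D)))
        * RAinv k 𝒜 q n
        * (((1 : Matrix (Fin n) (Fin n) 𝒜) + (q - q⁻¹) • (A * D)) ⊗ₖ (1 : Matrix (Fin n) (Fin n) 𝒜))
        * RAinv21 k 𝒜 q n
      = RAinv k 𝒜 q n
        * (((1 : Matrix (Fin n) (Fin n) 𝒜) + (q - q⁻¹) • (A * D)) ⊗ₖ (1 : Matrix (Fin n) (Fin n) 𝒜))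
        * RAinv21 k 𝒜 q n
        * ((1 : Matrix (Fin n) (Fin n) 𝒜) ⊗ₖ ((1 : Matrix (Fin n) (Fin n) 𝒜) + (q - q⁻¹) • (A * D))) := by
  obtain ⟨hM1, hM2, hM3⟩ := hrel
  -- abbreviations
  set Ri := RAinv k 𝒜 q n with hRi
  set R21i := RAinv21 k 𝒜 q n with hR21i
  set X1 := (A * D) ⊗ₖ (1 : Matrix (Fin n) (Fin n) 𝒜) with hX1def
  set X2 := (1 : Matrix (Fin n) (Fin n) 𝒜) ⊗ₖ (A * D) with hX2def
  set Pnn := flipA 𝒜 n n with hPnn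
  set C := (1 : Matrix (Fin n) (Fin n) 𝒜) ⊗ₖ A * (A ⊗ₖ (1 : Matrix (Fin m) (Fin m) 𝒜))
      * (D ⊗ₖ (1 : Matrix (Fin m) (Fin m) 𝒜)) * ((1 : Matrix (Fin n) (Fin n) 𝒜) ⊗ₖ D) with hC
  have hX1 : X1 = (A ⊗ₖ (1 : Matrix (Fin n) (Fin n) 𝒜))
      * (D ⊗ₖ (1 : Matrix (Fin n) (Fin n) 𝒜)) := (kron_one_mul A D).symm
  have hX2 : X2 = ((1 : Matrix (Fin n) (Fin n) 𝒜) ⊗ₖ A)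
      * ((1 : Matrix (Fin n) (Fin n) 𝒜) ⊗ₖ D) := (one_kron_mul A D).symm
  -- flipped M3
  have hM3' : (D ⊗ₖ (1 : Matrix (Fin n) (Fin n) 𝒜)) * R21i * ((1 : Matrix (Fin n) (Fin n) 𝒜) ⊗ₖ A)
      = ((1 : Matrix (Fin m) (Fin m) 𝒜) ⊗ₖ A) * RA21 k 𝒜 q m * (D ⊗ₖ (1 : Matrix (Fin m) (Fin m) 𝒜))
        + flipA 𝒜 n m := by
    have h := congrArg Tsw hM3
    simp only [Tsw_mul, Tsw_add, Tsw_kron_one, Tsw_one_kron, Tsw_RAinv, Tsw_RA, Tsw_flip] at h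
    exact h
  -- inverse form of M1
  have hM1inv : Ri * ((A ⊗ₖ (1 : Matrix (Fin n) (Fin n) 𝒜))
        * ((1 : Matrix (Fin m) (Fin m) 𝒜) ⊗ₖ A) * RA21 k 𝒜 q m)
      = ((1 : Matrix (Fin n) (Fin n) 𝒜) ⊗ₖ A) * (A ⊗ₖ (1 : Matrix (Fin m) (Fin m) 𝒜)) := by
    rw [← hM1]
    simp only [← Matrix.mul_assoc]
    rw [hRi, RAinv_mul_RA q hq, Matrix.one_mul]
  -- key 1
  have key1 : X2 * Ri * X1 * R21i = C + Pnn * X1 * R21i := by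
    calc X2 * Ri * X1 * R21i
        = ((1 : Matrix (Fin n) (Fin n) 𝒜) ⊗ₖ A)
            * (((1 : Matrix (Fin n) (Fin n) 𝒜) ⊗ₖ D) * Ri * (A ⊗ₖ (1 : Matrix (Fin n) (Fin n) 𝒜)))
            * ((D ⊗ₖ (1 : Matrix (Fin n) (Fin n) 𝒜)) * R21i) := by
          rw [hX1, hX2]; simp only [Matrix.mul_assoc]
      _ = ((1 : Matrix (Fin n) (Fin n) 𝒜) ⊗ₖ A)
            * ((A ⊗ₖ (1 : Matrix (Fin m) (Fin m) 𝒜)) * RA k 𝒜 q m * ((1 : Matrix (Fin m) (Fin m) 𝒜) ⊗ₖ D)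
                + flipA 𝒜 m n)
            * ((D ⊗ₖ (1 : Matrix (Fin n) (Fin n) 𝒜)) * R21i) := by rw [hM3]
      _ = ((1 : Matrix (Fin n) (Fin n) 𝒜) ⊗ₖ A) * (A ⊗ₖ (1 : Matrix (Fin m) (Fin m) 𝒜))
            * (RA k 𝒜 q m * ((1 : Matrix (Fin m) (Fin m) 𝒜) ⊗ₖ D) * (D ⊗ₖ (1 : Matrix (Fin n) (Fin n) 𝒜)))
            * R21i
          + ((1 : Matrix (Fin n) (Fin n) 𝒜) ⊗ₖ A) * flipA 𝒜 m n
            * ((D ⊗ₖ (1 : Matrix (Fin n) (Fin n) 𝒜)) * R21i) := by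
          rw [Matrix.mul_add, Matrix.add_mul]; simp only [Matrix.mul_assoc]
      _ = ((1 : Matrix (Fin n) (Fin n) 𝒜) ⊗ₖ A) * (A ⊗ₖ (1 : Matrix (Fin m) (Fin m) 𝒜))
            * ((D ⊗ₖ (1 : Matrix (Fin m) (Fin m) 𝒜)) * ((1 : Matrix (Fin n) (Fin n) 𝒜) ⊗ₖ D) * RA21 k 𝒜 q n)
            * R21i
          + Pnn * (A ⊗ₖ (1 : Matrix (Fin n) (Fin n) 𝒜))
            * ((D ⊗ₖ (1 : Matrix (Fin n) (Fin n) 𝒜)) * R21i) := by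
          rw [hM2, hPnn, ← flip_G1 A]
      _ = C * (RA21 k 𝒜 q n * R21i) + Pnn * X1 * R21i := by
          rw [hC, hX1]; simp only [Matrix.mul_assoc]
      _ = C + Pnn * X1 * R21i := by
          rw [hR21i, RA21_mul_RAinv21 q hq, Matrix.mul_one]
  -- key 2
  have key2 : Ri * X1 * R21i * X2 = C + Ri * X1 * Pnn := by
    calc Ri * X1 * R21i * X2
        = Ri * (A ⊗ₖ (1 : Matrix (Fin n) (Fin n) 𝒜))
            * ((D ⊗ₖ (1 : Matrix (Fin n) (Fin n) 𝒜)) * R21i * ((1 : Matrix (Fin n) (Fin n) 𝒜) ⊗ₖ A))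
            * ((1 : Matrix (Fin n) (Fin n) 𝒜) ⊗ₖ D) := by
          rw [hX1, hX2]; simp only [Matrix.mul_assoc]
      _ = Ri * (A ⊗ₖ (1 : Matrix (Fin n) (Fin n) 𝒜))
            * (((1 : Matrix (Fin m) (Fin m) 𝒜) ⊗ₖ A) * RA21 k 𝒜 q m * (D ⊗ₖ (1 : Matrix (Fin m) (Fin m) 𝒜))
                + flipA 𝒜 n m)
            * ((1 : Matrix (Fin n) (Fin n) 𝒜) ⊗ₖ D) := by rw [hM3']
      _ = Ri * ((A ⊗ₖ (1 : Matrix (Fin n) (Fin n) 𝒜)) * ((1 : Matrix (Fin m) (Fin m) 𝒜) ⊗ₖ A) * RA21 k 𝒜 q m)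
            * ((D ⊗ₖ (1 : Matrix (Fin m) (Fin m) 𝒜)) * ((1 : Matrix (Fin n) (Fin n) 𝒜) ⊗ₖ D))
          + Ri * (A ⊗ₖ (1 : Matrix (Fin n) (Fin n) 𝒜))
            * (flipA 𝒜 n m * ((1 : Matrix (Fin n) (Fin n) 𝒜) ⊗ₖ D)) := by
          rw [Matrix.mul_add, Matrix.add_mul]; simp only [Matrix.mul_assoc]
      _ = ((1 : Matrix (Fin n) (Fin n) 𝒜) ⊗ₖ A) * (A ⊗ₖ (1 : Matrix (Fin m) (Fin m) 𝒜))
            * ((D ⊗ₖ (1 : Matrix (Fin m) (Fin m) 𝒜)) * ((1 : Matrix (Fin n) (Fin n) 𝒜) ⊗ₖ D))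
          + Ri * (A ⊗ₖ (1 : Matrix (Fin n) (Fin n) 𝒜))
            * ((D ⊗ₖ (1 : Matrix (Fin n) (Fin n) 𝒜)) * Pnn) := by
          rw [hM1inv, hPnn, flip_G2 D]
      _ = C + Ri * X1 * Pnn := by
          rw [hC, hX1]; simp only [Matrix.mul_assoc]
  -- key 3a
  have hfG1 : X2 * Pnn = Pnn * X1 := by
    rw [hX1def, hX2def, hPnn]; exact flip_G1 (A * D)
  have hfG2 : Pnn * X2 = X1 * Pnn := by
    rw [hX1def, hX2def, hPnn]; exact flip_G2 (A * D)
  have key3a : X2 * Ri * R21i = X2 - (q - q⁻¹) • (Pnn * X1 * R21i) := by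
    calc X2 * Ri * R21i
        = X2 * (RA21 k 𝒜 q n - (q - q⁻¹) • Pnn) * R21i := by rw [hRi, heckeA q n, hPnn]
      _ = X2 * (RA21 k 𝒜 q n * R21i) - (q - q⁻¹) • (X2 * (Pnn * R21i)) := by
          rw [Matrix.mul_sub, Matrix.sub_mul, Matrix.mul_smul, Matrix.smul_mul]
          simp only [Matrix.mul_assoc]
      _ = X2 - (q - q⁻¹) • (Pnn * X1 * R21i) := by
          rw [hR21i, RA21_mul_RAinv21 q hq, Matrix.mul_one]
          congr 1
          congr 1
          rw [← Matrix.mul_assoc, hfG1]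
  have key3b : Ri * R21i * X2 = X2 - (q - q⁻¹) • (Ri * X1 * Pnn) := by
    calc Ri * R21i * X2
        = Ri * (RA k 𝒜 q n - (q - q⁻¹) • Pnn) * X2 := by rw [hR21i, heckeA21 q n, hPnn]
      _ = Ri * RA k 𝒜 q n * X2 - (q - q⁻¹) • (Ri * Pnn * X2) := by
          rw [Matrix.mul_sub, Matrix.sub_mul, Matrix.mul_smul, Matrix.smul_mul]
      _ = X2 - (q - q⁻¹) • (Ri * X1 * Pnn) := by
          rw [hRi, RAinv_mul_RA q hq, Matrix.one_mul]
          congr 1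
          congr 1
          rw [Matrix.mul_assoc, hfG2, ← Matrix.mul_assoc]
  -- expand the goal
  rw [Matrix.kronecker_add, Matrix.add_kronecker, Matrix.kronecker_smul, Matrix.smul_kronecker,
    Matrix.one_kronecker_one, ← hX1def, ← hX2def]
  simp only [Matrix.add_mul, Matrix.mul_add, Matrix.one_mul, Matrix.mul_one,
    Matrix.smul_mul, Matrix.mul_smul]
  rw [key1, key2, key3a, key3b]
  simp only [smul_add, smul_sub]
  abel
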